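/- Let γ = (v_0, v_1, …, v_{ℓ−1}, v_ℓ = v_0) be a simple cycle of length ℓ in a Tanner graph G, and let h ∈ ℕ₊ be a multiple of ℓ. For 0 ≤ i ≤ ℓ−1 let ψ_i = (v_i, v_{(i+1) mod ℓ}, …, v_{(i+h) mod ℓ}) be the length-h segment of γ starting at v_i; each ψ_i is then a closed path. Then every vertex of γ has total multiplicity exactly h over the paths ψ_0, …, ψ_{ℓ−1} (counting the common first/last vertex of each ψ_i once), and consequently χ_G(γ) = ((h+1)/h) · Σ_{i=0}^{ℓ−1} (1/(h+1)) χ_G(ψ_i). -/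

import Mathlib

open Finset

/-- A Tanner graph: a bipartite graph between a finite set `V` of variable nodes and a
finite set `J` of local-code nodes, given by its bipartite adjacency relation. -/
structure Tanner (V J : Type) where
  adj : V → J → Bool

namespace Tanner

variable {V J : Type} [Fintype V] [Fintype J] [DecidableEq V] [DecidableEq J]

/-- The vertex set of a Tanner graph. -/
abbrev Vert (V J : Type) := V ⊕ J

/-- Adjacency (as a `Bool`) between vertices of a Tanner graph. -/
def adjB (G : Tanner V J) : Vert V J → Vert V J → Bool
  | Sum.inl v, Sum.inr c => G.adj v c
  | Sum.inr c, Sum.inl v => G.adj v c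
  | _, _ => false

/-- Adjacency between vertices of a Tanner graph. -/
def Adj (G : Tanner V J) (w u : Vert V J) : Prop := G.adjB w u = true

/-- Degree of a variable node. -/
def degV (G : Tanner V J) (v : V) : ℕ := (univ.filter fun c => G.adj v c).card

/-- Degree of a local-code node. -/
def degC (G : Tanner V J) (c : J) : ℕ := (univ.filter fun v => G.adj v c).card

/-- A path of length `h`: a sequence of `h + 1` vertices in which every two consecutive
vertices are adjacent. -/
def IsPath (G : Tanner V J) (h : ℕ) (p : List (Vert V J)) : Prop :=
  p.length = h + 1 ∧ p.Chain' G.Adj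

/-- A path is backtrackless if it has no three consecutive vertices of the form
`(u, v, u)`. -/
def Backtrackless (p : List (Vert V J)) : Prop :=
  ∀ i, ∀ hi : i + 2 < p.length, p.get ⟨i, by omega⟩ ≠ p.get ⟨i + 2, hi⟩

/-- A simple cycle: a closed path whose only repeated vertex is the first vertex,
which equals the last vertex. -/
def IsSimpleCycle (G : Tanner V J) (p : List (Vert V J)) : Prop :=
  4 ≤ p.length ∧ p.Chain' G.Adj ∧ p.head? = p.getLast? ∧ p.dropLast.Nodup

/-- The multiplicity of a vertex in a path; for a closed path, the common first/last
vertex is counted once. -/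
def mult (p : List (Vert V J)) (w : Vert V J) : ℕ :=
  if 2 ≤ p.length ∧ p.head? = p.getLast? then p.dropLast.count w else p.count w

/-- The normalized characteristic vector of a path: the multiplicity of each variable
node in the path divided by its degree. -/
noncomputable def chi (G : Tanner V J) (p : List (Vert V J)) : V → ℝ :=
  fun v => (mult p (Sum.inl v) : ℝ) / (G.degV v : ℝ)

/-- The deviation set `B^{(h)}`: normalized characteristic vectors of backtrackless
paths of length `h`, scaled by `1 / (h + 1)`. -/
def Bset (G : Tanner V J) (h : ℕ) : Set (V → ℝ) :=
  { β | ∃ p : List (Vert V J), G.IsPath h p ∧ Backtrackless p ∧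
      β = fun v => G.chi p v / (h + 1) }

end Tanner

section Words

variable {V : Type} [Fintype V]

/-- The standard inner product on `ℝ^V`. -/
noncomputable def inner' (x y : V → ℝ) : ℝ := ∑ v, x v * y v

/-- A 0-1 word viewed as a real vector. -/
noncomputable def toR (x : V → Bool) : V → ℝ := fun v => if x v then 1 else 0

/-- The relative point `x ⊕ f`, defined coordinatewise by `|x_i - f_i|`. -/
noncomputable def relPt (x : V → Bool) (f : V → ℝ) : V → ℝ := fun v => |toR x v - f v|

/-- The coordinatewise product `(-1)^x ⋆ λ`. -/
noncomputable def flip' (x : V → Bool) (lam : V → ℝ) : V → ℝ :=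
  fun v => (if x v then -1 else 1) * lam v

end Words

/-- Local optimality: a codeword `x` is `h`-locally optimal with respect to `λ` if
`⟨λ, x ⊕ β⟩ > ⟨λ, x⟩` for every deviation `β ∈ B^{(h)}`. -/
def IsLocOpt {V J : Type} [Fintype V] [Fintype J] [DecidableEq V] [DecidableEq J]
    (G : Tanner V J) (h : ℕ) (x : V → Bool) (lam : V → ℝ) : Prop :=
  ∀ β ∈ G.Bset h, inner' lam (relPt x β) > inner' lam (toR x)

/-- A Tanner code: a Tanner graph together with a local code at every local-code node.
A local code is represented as the set of all assignments to the variable nodes whose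
restriction to the neighborhood of the local-code node is a local codeword; accordingly,
its membership predicate depends only on the values at the neighbors. -/
structure TannerCode (V J : Type) extends Tanner V J where
  localCode : J → Set (V → Bool)
  localCode_local : ∀ (j : J) (x y : V → Bool),
    (∀ v, adj v j = true → x v = y v) → x ∈ localCode j → y ∈ localCode j

namespace TannerCode

variable {V J : Type} [Fintype V] [Fintype J] [DecidableEq V] [DecidableEq J]

/-- The Tanner code: all words whose restriction to the neighborhood of every
local-code node is a local codeword. -/
def code (T : TannerCode V J) : Set (V → Bool) := { x | ∀ j, x ∈ T.localCode j }

/-- An even Tanner code: every variable node has even degree and every local codeword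
has even Hamming weight (on the neighborhood of its local-code node). -/
def IsEven (T : TannerCode V J) : Prop :=
  (∀ v, Even (T.toTanner.degV v)) ∧
  ∀ j, ∀ x ∈ T.localCode j,
    Even ((univ.filter fun v => T.adj v j = true ∧ x v = true).card)

/-- Linearity of the local codes: each local code contains the all-zero word and is
closed under mod-2 sums. -/
def IsLinear (T : TannerCode V J) : Prop :=
  (∀ j, (fun _ => false) ∈ T.localCode j) ∧
  ∀ j, ∀ x ∈ T.localCode j, ∀ y ∈ T.localCode j, (fun v => xor (x v) (y v)) ∈ T.localCode j

/-- The generalized fundamental polytope: the intersection of the convex hulls of the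
extended local codes. -/
noncomputable def polytope (T : TannerCode V J) : Set (V → ℝ) :=
  ⋂ j, convexHull ℝ (toR '' T.localCode j)

end TannerCode

/-!
Since `ℓ ∣ h`, every window `ψ_i` is closed, so its multiplicity function counts the `h`
vertices `v_i, …, v_{i+h-1}`. Summing over `i < ℓ` and exchanging the two sums, each of the `h`
offsets contributes a full period of `v`, i.e. the multiplicity function of `γ`. So the windows
cover `γ` exactly `h` times, and the identity for `χ_G` follows by linearity.
-/

-- `List.count` on `Vert V J` uses the componentwise `Sum.instBEq`, which has no `LawfulBEq` instance upstream.
instance Sum.instReflBEq {α β : Type*} [BEq α] [BEq β] [ReflBEq α] [ReflBEq β] :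
    ReflBEq (α ⊕ β) where
  rfl {x} := by
    cases x with
    | inl a => exact beq_self_eq_true a
    | inr b => exact beq_self_eq_true b

instance Sum.instLawfulBEq {α β : Type*} [BEq α] [BEq β] [LawfulBEq α] [LawfulBEq β] :
    LawfulBEq (α ⊕ β) where
  eq_of_beq {x y} h := by
    cases x <;> cases y <;> first | cases h | exact congrArg _ (eq_of_beq h)

theorem List.count_map_range {α : Type*} [BEq α] [LawfulBEq α] [DecidableEq α] (f : ℕ → α)
    (n : ℕ) (a : α) : ((List.range n).map f).count a = #{j ∈ Finset.range n | f j = a} := by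
  induction n with
  | zero => simp
  | succ n ih =>
    rw [List.range_succ, List.map_append, List.count_append, ih, Finset.range_add_one,
      Finset.filter_insert]
    split_ifs with h <;> simp [h]

namespace Function.Periodic

variable {M : Type*} [AddCommMonoid M] {f : ℕ → M} {c : ℕ}

theorem sum_range_add_left (hf : Periodic f c) (a : ℕ) :
    ∑ j ∈ range c, f (a + j) = ∑ j ∈ range c, f j := by
  induction a with
  | zero => simp
  | succ a ih =>
    rw [← ih]
    rcases c with _ | c
    · simp
    rw [Finset.sum_range_succ, Finset.sum_range_succ', add_zero,
      show a + 1 + c = a + (c + 1) by omega, hf]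
    congr 1
    exact Finset.sum_congr rfl fun j _ => by rw [add_assoc, add_comm 1 j]

theorem sum_range_sum_range_add (hf : Periodic f c) (h : ℕ) :
    ∑ i ∈ range c, ∑ j ∈ range h, f (i + j) = h • ∑ i ∈ range c, f i := by
  rw [Finset.sum_comm]
  simp_rw [add_comm _ (_ : ℕ), hf.sum_range_add_left, Finset.sum_const, Finset.card_range]

end Function.Periodic

namespace Tanner

variable {V J : Type} [DecidableEq V] [DecidableEq J]

theorem mult_map_range_of_closed (f : ℕ → Vert V J) {n : ℕ} (hn : 0 < n) (hf : f n = f 0)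
    (w : Vert V J) : mult ((List.range (n + 1)).map f) w = #{j ∈ range n | f j = w} := by
  have hclosed : ((List.range (n + 1)).map f).head? = ((List.range (n + 1)).map f).getLast? := by
    simp [List.head?_range, List.getLast?_range, hf]
  have hlength : 2 ≤ ((List.range (n + 1)).map f).length := by
    simp only [List.length_map, List.length_range]; omega
  rw [mult, if_pos ⟨hlength, hclosed⟩, List.range_succ, List.map_append, List.map_singleton,
    List.dropLast_concat, List.count_map_range]

theorem sum_mult_windows (v : ℕ → Vert V J) {ℓ h : ℕ} (hv : Function.Periodic v ℓ) (hℓ : 0 < ℓ)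
    (hh : 0 < h) (hdvd : ℓ ∣ h) (w : Vert V J) :
    ∑ i ∈ range ℓ, mult ((List.range (h + 1)).map fun j => v (i + j)) w =
      h * mult ((List.range (ℓ + 1)).map v) w := by
  have hwindow (i : ℕ) :
      mult ((List.range (h + 1)).map fun j => v (i + j)) w = #{j ∈ range h | v (i + j) = w} := by
    obtain ⟨n, rfl⟩ := hdvd
    refine mult_map_range_of_closed _ hh ?_ w
    simpa [mul_comm] using hv.nat_mul n i
  simp only [hwindow, mult_map_range_of_closed v hℓ (by simpa using hv 0), Finset.card_filter]
  rw [← smul_eq_mul]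
  exact (hv.comp fun x => if x = w then 1 else 0).sum_range_sum_range_add h

theorem mult_cycle_eq_one (v : ℕ → Vert V J) {ℓ : ℕ} (hv : v ℓ = v 0)
    (hinj : ∀ i < ℓ, ∀ j < ℓ, v i = v j → i = j) {k : ℕ} (hk : k < ℓ) :
    mult ((List.range (ℓ + 1)).map v) (v k) = 1 := by
  rw [mult_map_range_of_closed v (by omega) hv, Finset.card_eq_one]
  refine ⟨k, Finset.ext fun j => ?_⟩
  simp only [Finset.mem_filter, Finset.mem_range, Finset.mem_singleton]
  exact ⟨fun ⟨hj, hjk⟩ => hinj j hj k hk hjk, by rintro rfl; exact ⟨hk, rfl⟩⟩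

end Tanner

theorem stmt7_general {V J : Type} [Fintype J] [DecidableEq V] [DecidableEq J]
    (G : Tanner V J) (ℓ : ℕ) (hℓ : 0 < ℓ) (v : ℕ → Tanner.Vert V J)
    (hper : ∀ i, v (i + ℓ) = v i)
    (hinj : ∀ i < ℓ, ∀ j < ℓ, v i = v j → i = j)
    (h : ℕ) (hh : 0 < h) (hdvd : ℓ ∣ h) :
    (∀ k < ℓ, ∑ i ∈ Finset.range ℓ,
        Tanner.mult ((List.range (h + 1)).map fun j => v (i + j)) (v k) = h) ∧
    ∀ u : V, G.chi ((List.range (ℓ + 1)).map v) u =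
      ((h + 1 : ℝ) / h) * ∑ i ∈ Finset.range ℓ,
        (1 / (h + 1 : ℝ)) * G.chi ((List.range (h + 1)).map fun j => v (i + j)) u := by
  have hwindows := Tanner.sum_mult_windows v hper hℓ hh hdvd
  refine ⟨fun k hk => ?_, fun u => ?_⟩
  · rw [hwindows, Tanner.mult_cycle_eq_one v (by simpa using hper 0) hinj hk, mul_one]
  · simp only [Tanner.chi]
    rw [← Finset.mul_sum, ← Finset.sum_div, ← Nat.cast_sum, hwindows, Nat.cast_mul]
    field_simp

/-- Let `γ = (v_0, …, v_ℓ = v_0)` be a simple cycle of length `ℓ` in a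
Tanner graph `G` (encoded by an `ℓ`-periodic vertex sequence `v` that is injective on
`[0, ℓ)` with consecutive vertices adjacent), and let `h ∈ ℕ₊` be a multiple of `ℓ`.
For `0 ≤ i ≤ ℓ−1` let `ψ_i = (v_i, …, v_{i+h})` be the length-`h` segment of `γ`
starting at `v_i`; each `ψ_i` is then a closed path. Then every vertex of `γ` has
total multiplicity exactly `h` over `ψ_0, …, ψ_{ℓ−1}` (counting the common first/last
vertex of each `ψ_i` once), and `χ_G(γ) = ((h+1)/h) · Σ_{i<ℓ} (1/(h+1)) χ_G(ψ_i)`. -/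
theorem stmt7 {V J : Type} [Fintype V] [Fintype J] [DecidableEq V] [DecidableEq J]
    (G : Tanner V J) (ℓ : ℕ) (hℓ : 0 < ℓ) (v : ℕ → Tanner.Vert V J)
    (hper : ∀ i, v (i + ℓ) = v i)
    (hinj : ∀ i < ℓ, ∀ j < ℓ, v i = v j → i = j)
    (hadj : ∀ i, G.Adj (v i) (v (i + 1)))
    (h : ℕ) (hh : 0 < h) (hdvd : ℓ ∣ h) :
    (∀ k < ℓ, ∑ i ∈ Finset.range ℓ,
        Tanner.mult ((List.range (h + 1)).map fun j => v (i + j)) (v k) = h) ∧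
    ∀ u : V, G.chi ((List.range (ℓ + 1)).map v) u =
      ((h + 1 : ℝ) / h) * ∑ i ∈ Finset.range ℓ,
        (1 / (h + 1 : ℝ)) * G.chi ((List.range (h + 1)).map fun j => v (i + j)) u :=
  stmt7_general G ℓ hℓ v hper hinj h hh hdvd
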